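/- Under the colour rewriting rules G → YBG, Y → YBG, O → YBO, B → BO applied to rows of colours (each row obtained by replacing every letter of the previous row by its image word, concatenated in order), the number of letters in the n-th row starting from a single G grows like the odd-indexed Fibonacci numbers: if Lₙ denotes the length of the n-th row with L₀ = 1, then Lₙ = f(2n+1) where f 1 = 1, f 2 = 2, f(n+2) = f(n+1) + f n. -/

import Mathlib

inductive Color | G | Y | B | O
deriving DecidableEq

/-- The substitution G → YBG, Y → YBG, O → YBO, B → BO. -/
def sub : Color → List Color
  | .G => [.Y, .B, .G]
  | .Y => [.Y, .B, .G]
  | .O => [.Y, .B, .O]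
  | .B => [.B, .O]

/-- The substitution extended to words by concatenation. -/
def subW (w : List Color) : List Color := w.flatMap sub

/-! Let `aₙ` be the number of letters other than `B` in row `n`. A letter other than `B` becomes
a word of length 3 with two such letters, and `B` becomes a word of length 2 with one, so
`aₙ₊₁ = aₙ + Lₙ` and `Lₙ₊₁ = aₙ₊₁ + Lₙ`. Hence the interleaved sequence `a₀, L₀, a₁, L₁, …`
obeys the recurrence of `f` and starts `1, 1 = f 0, f 1`, so `aₙ = f (2n)` and `Lₙ = f (2n+1)`. -/

theorem countP_ne_B_sub (c : Color) :
    (sub c).countP (· ≠ Color.B) = (if c ≠ Color.B then 1 else 0) + 1 := by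
  cases c <;> rfl

theorem length_sub (c : Color) :
    (sub c).length = (sub c).countP (· ≠ Color.B) + 1 := by
  cases c <;> rfl

theorem countP_ne_B_subW (w : List Color) :
    (subW w).countP (· ≠ Color.B) = w.countP (· ≠ Color.B) + w.length := by
  induction w with
  | nil => rfl
  | cons c w ih =>
    rw [subW, List.flatMap_cons, List.countP_append, ← subW, ih, countP_ne_B_sub,
      List.countP_cons, List.length_cons]
    simp only [decide_eq_true_eq]
    omega

theorem length_subW (w : List Color) :
    (subW w).length = (subW w).countP (· ≠ Color.B) + w.length := by
  induction w with
  | nil => rfl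
  | cons c w ih =>
    rw [subW, List.flatMap_cons, List.countP_append, List.length_append, ← subW, ih,
      length_sub, List.length_cons]
    omega

/-- The length of the n-th row obtained from a single G equals `f (2n+1)`. -/
theorem row_length_fib
    (f : ℕ → ℕ) (hf1 : f 1 = 1) (hf2 : f 2 = 2)
    (hf : ∀ n, f (n + 2) = f (n + 1) + f n) :
    ∀ n, (subW^[n] [Color.G]).length = f (2 * n + 1) := by
  have hf0 : f 0 = 1 := by
    have : f 2 = f 1 + f 0 := hf 0
    omega
  have key : ∀ n, (subW^[n] [Color.G]).countP (· ≠ Color.B) = f (2 * n) ∧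
      (subW^[n] [Color.G]).length = f (2 * n + 1) := by
    intro n
    induction n with
    | zero => simp [hf0, hf1]
    | succ n ih =>
      obtain ⟨ha, hL⟩ := ih
      have ha' : (subW^[n + 1] [Color.G]).countP (· ≠ Color.B) = f (2 * n + 2) := by
        rw [Function.iterate_succ_apply', countP_ne_B_subW, ha, hL, hf, add_comm]
      refine ⟨ha', ?_⟩
      rw [Function.iterate_succ_apply', length_subW, ← Function.iterate_succ_apply' subW, ha',
        hL, show 2 * (n + 1) + 1 = 2 * n + 1 + 2 by ring, hf (2 * n + 1)]
  exact fun n => (key n).2
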